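/- arXiv:2006.12638 — 2 statements merged into one kernel-verified Lean document; each statement's English description precedes it below -/
import Mathlib

section
/- Let HS be a finite nonempty set of hypotheses, let q₁, …, q_n : HS → AS be questions such that the joint answer map p ↦ (q₁(p), …, q_n(p)) is injective on HS, and let bb ∈ HS be the true hypothesis. Define the greedy identification process: S₀ = HS, and given S_k containing bb, if every q_i is constant on S_k the process stops; otherwise choose any index i_k maximizing the Shannon entropy of the pushforward of the uniform distribution on S_k under q_i, and set S_{k+1} = { p ∈ S_k : q_{i_k}(p) = q_{i_k}(bb) }. Then the process stops after at most |HS| − 1 steps, bb ∈ S_k at every step, and when it stops the surviving set equals {bb}. -/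
/-- Shannon entropy of the pushforward, under `g : α → AS`, of the uniform distribution
on a finite set `T`: each cell `{p ∈ T : g p = a}` gets mass `|cell| / |T|`. -/
noncomputable def uniformPushforwardEntropy {α AS : Type*} [DecidableEq AS]
    (T : Finset α) (g : α → AS) : ℝ :=
  ∑ a ∈ T.image g,
    Real.negMulLog (((T.filter (fun p => g p = a)).card : ℝ) / (T.card : ℝ))

lemma negMulLog_pos' {x : ℝ} (h1 : 0 < x) (h2 : x < 1) : 0 < Real.negMulLog x := by
  have := Real.log_neg h1 h2
  have : x * Real.log x < 0 := mul_neg_of_pos_of_neg h1 this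
  simp only [Real.negMulLog]
  linarith

lemma upe_const {α AS : Type*} [DecidableEq AS] (T : Finset α) (g : α → AS)
    (h : ∀ p ∈ T, ∀ p' ∈ T, g p = g p') :
    uniformPushforwardEntropy T g = 0 := by
  rcases T.eq_empty_or_nonempty with rfl | ⟨p0, hp0⟩
  · simp [uniformPushforwardEntropy]
  · have himg : T.image g = {g p0} := by
      apply Finset.Subset.antisymm
      · intro a ha
        rcases Finset.mem_image.mp ha with ⟨p, hp, rfl⟩
        simp [h p hp p0 hp0]
      · simp [Finset.mem_image]; exact ⟨p0, hp0, rfl⟩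
    have hfil : T.filter (fun p => g p = g p0) = T := by
      apply Finset.filter_true_of_mem
      intro p hp; exact h p hp p0 hp0
    have hc : (T.card : ℝ) ≠ 0 := by
      exact_mod_cast Finset.card_ne_zero_of_mem hp0
    simp [uniformPushforwardEntropy, himg, hfil, div_self hc]

lemma upe_pos {α AS : Type*} [DecidableEq AS] (T : Finset α) (g : α → AS)
    (p p' : α) (hp : p ∈ T) (hp' : p' ∈ T) (hne : g p ≠ g p') :
    0 < uniformPushforwardEntropy T g := by
  have hTpos : 0 < (T.card : ℝ) := by
    exact_mod_cast Finset.card_pos.mpr ⟨p, hp⟩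
  apply Finset.sum_pos
  · intro a ha
    rcases Finset.mem_image.mp ha with ⟨r, hr, rfl⟩
    apply negMulLog_pos'
    · apply div_pos _ hTpos
      have hrmem : r ∈ T.filter (fun x => g x = g r) := Finset.mem_filter.mpr ⟨hr, rfl⟩
      exact_mod_cast Finset.card_pos.mpr ⟨r, hrmem⟩
    · rw [div_lt_one hTpos]
      have : ∃ s ∈ T, g s ≠ g r := by
        by_cases h1 : g p = g r
        · exact ⟨p', hp', fun h2 => hne (h1.trans h2.symm)⟩
        · exact ⟨p, hp, h1⟩
      rcases this with ⟨s, hs, hsne⟩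
      have hsub : T.filter (fun x => g x = g r) ⊂ T := by
        refine Finset.ssubset_iff_of_subset (Finset.filter_subset _ _) |>.mpr ?_
        exact ⟨s, hs, by simp [hsne]⟩
      exact_mod_cast Finset.card_lt_card hsub
  · exact ⟨g p, Finset.mem_image.mpr ⟨p, hp, rfl⟩⟩

/-- Proposition 1 (greedy plan is a solution): if the joint answer map of the questions
`q i : HS → AS` is injective, then any run of the greedy identification process —
start with `S₀ = HS`; while some question is non-constant on the current set, pick an
index `idx k` maximizing the entropy of the pushforward of the uniform distribution and
keep exactly the hypotheses answering like the true hypothesis `bb` — keeps `bb` in every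
surviving set, stops (all questions constant) within `|HS| − 1` steps, and at stopping
the surviving set is exactly `{bb}`. -/
theorem greedy_plan_identifies_blackbox
    {HS AS : Type*} [Fintype HS] [Nonempty HS] [DecidableEq HS] [DecidableEq AS]
    (n : ℕ) (q : Fin n → HS → AS)
    (hinj : Function.Injective (fun p : HS => fun i : Fin n => q i p))
    (bb : HS)
    (T : ℕ → Finset HS) (idx : ℕ → Fin n)
    (hT0 : T 0 = Finset.univ)
    (hmax : ∀ k, ¬ (∀ i : Fin n, ∀ p ∈ T k, ∀ p' ∈ T k, q i p = q i p') →
      ∀ i : Fin n,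
        uniformPushforwardEntropy (T k) (q i) ≤ uniformPushforwardEntropy (T k) (q (idx k)))
    (hstep : ∀ k, ¬ (∀ i : Fin n, ∀ p ∈ T k, ∀ p' ∈ T k, q i p = q i p') →
      T (k + 1) = (T k).filter (fun p => q (idx k) p = q (idx k) bb)) :
    ∃ k : ℕ, k ≤ Fintype.card HS - 1 ∧
      (∀ i : Fin n, ∀ p ∈ T k, ∀ p' ∈ T k, q i p = q i p') ∧
      (∀ j : ℕ, j ≤ k → bb ∈ T j) ∧
      T k = {bb} := by
  classical
  set C : ℕ → Prop := fun k => ∀ i : Fin n, ∀ p ∈ T k, ∀ p' ∈ T k, q i p = q i p' with hC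
  set N := Fintype.card HS with hN
  have hNpos : 0 < N := Fintype.card_pos
  -- key invariant
  have key : ∀ k : ℕ, (∀ j, j < k → ¬ C j) → bb ∈ T k ∧ (T k).card + k ≤ N := by
    intro k
    induction k with
    | zero => intro _; simp [hT0, hN]
    | succ k ih =>
      intro h
      have hk : ¬ C k := h k (Nat.lt_succ_self k)
      obtain ⟨hbb, hcard⟩ := ih (fun j hj => h j (hj.trans (Nat.lt_succ_self k)))
      have hTs := hstep k hk
      constructor
      · rw [hTs]; exact Finset.mem_filter.mpr ⟨hbb, rfl⟩
      · -- idx k is non-constant on T k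
        have hnc : ∃ p ∈ T k, ∃ p' ∈ T k, q (idx k) p ≠ q (idx k) p' := by
          by_contra hcon
          push_neg at hcon
          obtain ⟨i, p, hp, p', hp', hne⟩ := by
            simpa only [hC, not_forall] using hk
          have hpos := upe_pos (T k) (q i) p p' hp hp' hne
          have hzero := upe_const (T k) (q (idx k)) hcon
          have := hmax k hk i
          rw [hzero] at this
          linarith
        obtain ⟨p, hp, p', hp', hne⟩ := hnc
        have : ∃ s ∈ T k, q (idx k) s ≠ q (idx k) bb := by
          by_cases h1 : q (idx k) p = q (idx k) bb
          · exact ⟨p', hp', fun h2 => hne (h1.trans h2.symm)⟩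
          · exact ⟨p, hp, h1⟩
        obtain ⟨s, hs, hsne⟩ := this
        have hss : T (k+1) ⊂ T k := by
          rw [hTs]
          refine Finset.ssubset_iff_of_subset (Finset.filter_subset _ _) |>.mpr ?_
          exact ⟨s, hs, by simp [hsne]⟩
        have := Finset.card_lt_card hss
        omega
  -- there exists k ≤ N - 1 with C k
  have hex : ∃ k, C k := by
    by_contra hcon
    push_neg at hcon
    obtain ⟨hbb, hcard⟩ := key N (fun j _ => hcon j)
    have : 0 < (T N).card := Finset.card_pos.mpr ⟨bb, hbb⟩
    omega
  have hdec : DecidablePred C := Classical.decPred C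
  let k0 := Nat.find hex
  have hCk0 : C k0 := Nat.find_spec hex
  have hlt : ∀ j, j < k0 → ¬ C j := fun j hj => Nat.find_min hex hj
  obtain ⟨hbb0, hcard0⟩ := key k0 hlt
  have hk0le : k0 ≤ N - 1 := by
    have : 0 < (T k0).card := Finset.card_pos.mpr ⟨bb, hbb0⟩
    omega
  refine ⟨k0, hk0le, hCk0, ?_, ?_⟩
  · intro j hj
    exact (key j (fun j' hj' => hlt j' (lt_of_lt_of_le hj' hj))).1
  · apply Finset.Subset.antisymm
    · intro p hp
      have : (fun i => q i p) = (fun i => q i bb) := by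
        funext i; exact hCk0 i p hp bb hbb0
      simp [hinj this]
    · simp [hbb0]
end

section
/- Fix n ∈ ℕ. For i ∈ {0, 1, …, n}, define f(i) = −((i+1)/(n+1))·log((i+1)/(n+1)) − ((n−i)/(n+1))·log((n−i)/(n+1)), with the convention 0·log 0 = 0. Then for every i ∈ {0, 1, …, n}, f(i) ≤ f(⌊n/2⌋); that is, the entropy of the threshold question is maximized at the middle index. -/
/-!
`thresholdEntropy n i` is the binary entropy of `(i + 1) / (n + 1)`. Binary entropy is symmetric
about `1/2` and increasing on `[0, 1/2]`, so it can only drop as its argument moves away from `1/2`.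
The distance of `(i + 1) / (n + 1)` from `1/2` is `|2i + 1 - n| / (2(n + 1))`, and `i = ⌊n/2⌋`
minimises `|2i + 1 - n|` over the integers.
-/

/-- Example 2: the entropy of the two-point answer distribution of the threshold
question `q i` ("is the position ≤ i?") under the uniform prior on `{0, …, n}`:
`f i = −((i+1)/(n+1))·log((i+1)/(n+1)) − ((n−i)/(n+1))·log((n−i)/(n+1))`. -/
noncomputable def thresholdEntropy (n i : ℕ) : ℝ :=
  Real.negMulLog (((i : ℝ) + 1) / ((n : ℝ) + 1)) +
    Real.negMulLog (((n : ℝ) - (i : ℝ)) / ((n : ℝ) + 1))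

open Real

lemma binEntropy_two_inv_add_eq_sub_abs (t : ℝ) :
    binEntropy (2⁻¹ + t) = binEntropy (2⁻¹ - |t|) := by
  rcases abs_cases t with ⟨ht, -⟩ | ⟨ht, -⟩
  · rw [ht, binEntropy_two_inv_add]
  · rw [ht, sub_neg_eq_add]

lemma binEntropy_le_of_abs_sub_two_inv_le {p q : ℝ} (hp₀ : 0 ≤ p) (hp₁ : p ≤ 1)
    (hpq : |q - 2⁻¹| ≤ |p - 2⁻¹|) : binEntropy p ≤ binEntropy q := by
  have hp : |p - 2⁻¹| ≤ 2⁻¹ := abs_le.2 ⟨by linarith, by linarith⟩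
  rw [← add_sub_cancel (2⁻¹ : ℝ) p, ← add_sub_cancel (2⁻¹ : ℝ) q,
    binEntropy_two_inv_add_eq_sub_abs, binEntropy_two_inv_add_eq_sub_abs]
  refine binEntropy_strictMonoOn.monotoneOn ⟨?_, ?_⟩ ⟨?_, ?_⟩ ?_ <;>
    linarith [abs_nonneg (q - 2⁻¹)]

lemma thresholdEntropy_eq_binEntropy (n i : ℕ) :
    thresholdEntropy n i = binEntropy (((i : ℝ) + 1) / ((n : ℝ) + 1)) := by
  rw [binEntropy_eq_negMulLog_add_negMulLog_one_sub, thresholdEntropy, one_sub_div (by positivity)]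
  ring_nf

lemma div_sub_two_inv_eq (n i : ℕ) :
    ((i : ℝ) + 1) / ((n : ℝ) + 1) - 2⁻¹ =
      ((2 * (i : ℤ) + 1 - n : ℤ) : ℝ) / (2 * ((n : ℝ) + 1)) := by
  field_simp
  push_cast
  ring

lemma abs_two_mul_div_two_add_one_sub_le (n i : ℕ) :
    |2 * ((n / 2 : ℕ) : ℤ) + 1 - n| ≤ |2 * (i : ℤ) + 1 - n| := by
  rcases abs_cases (2 * ((n / 2 : ℕ) : ℤ) + 1 - n) with ⟨h, _⟩ | ⟨h, _⟩ <;>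
    rcases abs_cases (2 * (i : ℤ) + 1 - n) with ⟨h', _⟩ | ⟨h', _⟩ <;>
    rw [h, h'] <;> omega

/-- The entropy of the threshold question is maximized at the middle index `⌊n/2⌋`,
recovering the binary-search pivot. -/
theorem thresholdEntropy_le_middle (n : ℕ) :
    ∀ i : ℕ, i ≤ n → thresholdEntropy n i ≤ thresholdEntropy n (n / 2) := by
  intro i hi
  rw [thresholdEntropy_eq_binEntropy, thresholdEntropy_eq_binEntropy]
  have hn : (0 : ℝ) < (n : ℝ) + 1 := by positivity
  refine binEntropy_le_of_abs_sub_two_inv_le (by positivity) ?_ ?_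
  · rw [div_le_one hn]
    exact_mod_cast Nat.succ_le_succ hi
  · rw [div_sub_two_inv_eq, div_sub_two_inv_eq, abs_div, abs_div]
    refine div_le_div_of_nonneg_right ?_ (by positivity)
    exact_mod_cast abs_two_mul_div_two_add_one_sub_le n i
end
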